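/- arXiv:2311.08339 — 2 statements merged into one kernel-verified Lean document; each statement's English description precedes it below -/
import Mathlib

section
/- Theorem 3 (structure decomposition): suppose y* contains a pair (i, j) and both the energy and ensemble decompose across (i, j): ΔG(x, y) = ΔG_in(x, y restricted to [i..j]) + ΔG_out(x, y restricted outside) for all structures y containing pair (i, j), and any structure obtained from y* by replacing its [i..j] part with any context-constrained structure (one whose endpoints i, j are paired to each other) remains a valid structure in every ensemble containing y*. If the substructure y*_{i→j} is context-constrained undesignable (for every x there is a context-constrained y'' ≠ y*_{i→j} with ΔG_in(x, y'') ≤ ΔG_in(x, y*_{i→j})), then y* is uMFE-undesignable. -/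
/-- Theorem 3 (structure decomposition): if the substructure y*_{i→j} of y*
enclosed by a pair is context-constrained undesignable, then y* is
uMFE-undesignable.  Here `SubY` is the type of context-constrained structures
on [i..j], `subst` substitutes a context-constrained structure for y*_{i→j}
inside y*, and the energy decomposes additively across the pair (i, j). -/
theorem stmt_11 {X Y SubY : Type}
    (𝒴 : X → Set Y) (ΔG : X → Y → ℝ)
    (Gin : X → SubY → ℝ) (Gout : X → ℝ)
    (ystar : Y) (ystarIn : SubY)       -- y* and its substructure y*_{i→j}
    (subst : SubY → Y)                 -- replacement of the inner part of y*
    (hsubst_star : subst ystarIn = ystar)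
    -- energy decomposition across the pair (i, j): outer part is unchanged
    (hdecomp : ∀ x s, ΔG x (subst s) = Gin x s + Gout x)
    -- substituted structures stay in the ensemble
    (hens : ∀ x s, ystar ∈ 𝒴 x → subst s ∈ 𝒴 x)
    -- substitution of a different inner part yields a different structure
    (hinj : ∀ s, s ≠ ystarIn → subst s ≠ ystar)
    -- y*_{i→j} is context-constrained undesignable
    (hccu : ∀ x, ∃ s, s ≠ ystarIn ∧ Gin x s ≤ Gin x ystarIn) :
    ¬ ∃ x, ystar ∈ 𝒴 x ∧ ∀ y ∈ 𝒴 x, y ≠ ystar → ΔG x ystar < ΔG x y := by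
  rintro ⟨x, hx, hmin⟩
  obtain ⟨s, hne, hle⟩ := hccu x
  have h := hmin (subst s) (hens x s hx) (hinj s hne)
  rw [hdecomp, ← hsubst_star, hdecomp] at h
  linarith
end

section
/- Context-constrained undesignability of a substructure implies existence of a global rival: if for every sequence x there is a context-constrained structure y'' ≠ y*_{i→j} on [i..j] with inner energy ΔG_in(x, y'') ≤ ΔG_in(x, y*_{i→j}), then for every sequence x there exists a full structure y' ≠ y* with ΔG(x, y') ≤ ΔG(x, y*), where y' is obtained by substituting y'' for y*_{i→j} inside y*. -/
/-- Context-constrained undesignability of a substructure yields, for every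
sequence, a global rival structure obtained by substitution. -/
theorem stmt_19 {X Y SubY : Type}
    (ΔG : X → Y → ℝ)
    (Gin : X → SubY → ℝ) (Gout : X → ℝ)
    (ystar : Y) (ystarIn : SubY)
    (subst : SubY → Y)
    (hsubst_star : subst ystarIn = ystar)
    (hdecomp : ∀ x s, ΔG x (subst s) = Gin x s + Gout x)
    (hinj : Function.Injective subst)
    (hccu : ∀ x, ∃ s, s ≠ ystarIn ∧ Gin x s ≤ Gin x ystarIn) :
    ∀ x, ∃ y', y' ≠ ystar ∧ ΔG x y' ≤ ΔG x ystar := by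
  intro x
  obtain ⟨s, hne, hle⟩ := hccu x
  refine ⟨subst s, ?_, ?_⟩
  · rw [← hsubst_star]
    exact fun h => hne (hinj h)
  · rw [← hsubst_star, hdecomp, hdecomp]
    linarith
end
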